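/- arXiv:1705.02697 — 4 statements merged into one kernel-verified Lean document; each statement's English description precedes it below -/
import Mathlib

section
/- If N is a submodule of an R-module M, then the submodule generated by the envelope E_M(N) is contained in the completely prime radical of N, i.e., ⟨E_M(N)⟩ ⊆ β_co(N). -/
/-- A submodule `P` is completely prime if it is proper and `a • m ∈ P` implies
`m ∈ P` or `a • M ⊆ P`. -/
def IsCompletelyPrimeSubmodule {R : Type*} [Ring R] {M : Type*} [AddCommGroup M] [Module R M]
    (P : Submodule R M) : Prop :=
  P ≠ ⊤ ∧ ∀ (a : R) (m : M), a • m ∈ P → m ∈ P ∨ ∀ x : M, a • x ∈ P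

/-- A submodule `P` is prime if it is proper and for every two-sided ideal `A` of `R`
and submodule `N`, `A N ⊆ P` implies `N ⊆ P` or `A M ⊆ P`. -/
def IsPrimeSubmodule {R : Type*} [Ring R] {M : Type*} [AddCommGroup M] [Module R M]
    (P : Submodule R M) : Prop :=
  P ≠ ⊤ ∧ ∀ (A : TwoSidedIdeal R) (N : Submodule R M),
    (∀ a ∈ A, ∀ n ∈ N, a • n ∈ P) → N ≤ P ∨ ∀ a ∈ A, ∀ x : M, a • x ∈ P

/-- The prime radical `β(N)`: the intersection of all prime submodules containing `N`
(equal to `⊤ = M` if there are none). -/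
def primeRadical {R : Type*} [Ring R] {M : Type*} [AddCommGroup M] [Module R M]
    (N : Submodule R M) : Submodule R M :=
  sInf {P | IsPrimeSubmodule P ∧ N ≤ P}

/-- The completely prime radical `β_co(N)`: the intersection of all completely prime
submodules containing `N` (equal to `⊤ = M` if there are none). -/
def cpRadical {R : Type*} [Ring R] {M : Type*} [AddCommGroup M] [Module R M]
    (N : Submodule R M) : Submodule R M :=
  sInf {P | IsCompletelyPrimeSubmodule P ∧ N ≤ P}

/-- The envelope `E_M(N) = {r • m : r^k • m ∈ N for some positive integer k}`. -/
def envelope {R : Type*} [Ring R] {M : Type*} [AddCommGroup M] [Module R M]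
    (N : Submodule R M) : Set M :=
  {x | ∃ (r : R) (m : M) (k : ℕ), 0 < k ∧ r ^ k • m ∈ N ∧ x = r • m}

/-- A submodule `N` is completely semiprime if `a ^ 2 • m ∈ N` implies `a • m ∈ N`. -/
def IsCompletelySemiprimeSubmodule {R : Type*} [Ring R] {M : Type*} [AddCommGroup M]
    [Module R M] (N : Submodule R M) : Prop :=
  ∀ (a : R) (m : M), a ^ 2 • m ∈ N → a • m ∈ N

section CompletelySemiprime

variable {R : Type*} [Ring R] {M : Type*} [AddCommGroup M] [Module R M]

theorem IsCompletelyPrimeSubmodule.isCompletelySemiprimeSubmodule {P : Submodule R M}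
    (hP : IsCompletelyPrimeSubmodule P) : IsCompletelySemiprimeSubmodule P := by
  intro a m h
  rw [pow_two, mul_smul] at h
  exact (hP.2 a (a • m) h).elim id (· m)

theorem isCompletelySemiprimeSubmodule_sInf {S : Set (Submodule R M)}
    (hS : ∀ P ∈ S, IsCompletelySemiprimeSubmodule P) :
    IsCompletelySemiprimeSubmodule (sInf S) := by
  intro a m h
  rw [Submodule.mem_sInf] at h ⊢
  exact fun P hP => hS P hP a m (h P hP)

theorem cpRadical_isCompletelySemiprimeSubmodule (N : Submodule R M) :
    IsCompletelySemiprimeSubmodule (cpRadical N) :=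
  isCompletelySemiprimeSubmodule_sInf fun _ hP => hP.1.isCompletelySemiprimeSubmodule

theorem le_cpRadical (N : Submodule R M) : N ≤ cpRadical N :=
  le_sInf fun _ hP => hP.2

namespace IsCompletelySemiprimeSubmodule

variable {P : Submodule R M} (hP : IsCompletelySemiprimeSubmodule P)
include hP

theorem smul_mem_of_pow_two_pow_smul_mem (a : R) (m : M) (j : ℕ)
    (h : a ^ 2 ^ j • m ∈ P) : a • m ∈ P := by
  induction j with
  | zero => simpa using h
  | succ j ih => exact ih (hP _ m (by rwa [← pow_mul, ← pow_succ]))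

/-- Raise the exponent `k` to a power of two `2 ^ k ≥ k`, then halve it `k` times. -/
theorem smul_mem_of_pow_smul_mem (a : R) (m : M) {k : ℕ} (h : a ^ k • m ∈ P) :
    a • m ∈ P := by
  refine hP.smul_mem_of_pow_two_pow_smul_mem a m k ?_
  have hk : k ≤ 2 ^ k := k.lt_two_pow_self.le
  rw [← Nat.sub_add_cancel hk, pow_add, mul_smul]
  exact P.smul_mem _ h

theorem envelope_subset {N : Submodule R M} (hNP : N ≤ P) : envelope N ⊆ P := by
  rintro _ ⟨a, m, k, -, hN, rfl⟩
  exact hP.smul_mem_of_pow_smul_mem a m (hNP hN)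

end IsCompletelySemiprimeSubmodule

end CompletelySemiprime

/-- `⟨E_M(N)⟩ ⊆ β_co(N)`. -/
theorem span_envelope_le_cpRadical {R : Type*} [Ring R] {M : Type*} [AddCommGroup M]
    [Module R M] (N : Submodule R M) :
    Submodule.span R (envelope N) ≤ cpRadical N :=
  Submodule.span_le.mpr <|
    (cpRadical_isCompletelySemiprimeSubmodule N).envelope_subset (le_cpRadical N)
end

section
/- If N is a completely semiprime submodule of an R-module M, then the envelope of N equals N, i.e., E_M(N) = N. -/
section

variable {R : Type*} [Ring R] {M : Type*} [AddCommGroup M] [Module R M]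

theorem subset_envelope (N : Submodule R M) : (N : Set M) ⊆ envelope N :=
  fun x hx => ⟨1, x, 1, one_pos, by simpa using hx, (one_smul R x).symm⟩

namespace IsCompletelySemiprimeSubmodule

variable {N : Submodule R M}

theorem pow_succ_smul_mem (hN : IsCompletelySemiprimeSubmodule N) {r : R} {m : M} {k : ℕ}
    (h : r ^ (k + 2) • m ∈ N) : r ^ (k + 1) • m ∈ N := by
  refine hN _ _ ?_
  have hsq : (r ^ (k + 1)) ^ 2 = r ^ k * r ^ (k + 2) := by
    rw [← pow_mul, ← pow_add]
    ring_nf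
  rw [hsq, mul_smul]
  exact N.smul_mem _ h

theorem smul_mem_of_pow_smul_mem_s1 (hN : IsCompletelySemiprimeSubmodule N) {r : R} {m : M}
    {k : ℕ} (hk : 0 < k) (h : r ^ k • m ∈ N) : r • m ∈ N := by
  obtain ⟨k, rfl⟩ := Nat.exists_eq_add_one_of_ne_zero hk.ne'
  induction k with
  | zero => simpa using h
  | succ k ih => exact ih (Nat.succ_pos k) (hN.pow_succ_smul_mem h)

theorem envelope_subset_s1 (hN : IsCompletelySemiprimeSubmodule N) : envelope N ⊆ N := by
  rintro _ ⟨r, m, k, hk, hmem, rfl⟩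
  exact hN.smul_mem_of_pow_smul_mem_s1 hk hmem

end IsCompletelySemiprimeSubmodule

end

theorem envelope_eq_self_of_completelySemiprime_general {R : Type*} [Ring R] {M : Type*}
    [AddCommGroup M] [Module R M] (N : Submodule R M)
    (hcsp : IsCompletelySemiprimeSubmodule N) :
    envelope N = (N : Set M) :=
  hcsp.envelope_subset_s1.antisymm (subset_envelope N)

/-- if `N` is a (proper) completely semiprime submodule then `E_M(N) = N`. -/
theorem envelope_eq_self_of_completelySemiprime {R : Type*} [Ring R] {M : Type*}
    [AddCommGroup M] [Module R M] (N : Submodule R M) (hproper : N ≠ ⊤)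
    (hcsp : IsCompletelySemiprimeSubmodule N) :
    envelope N = (N : Set M) :=
  envelope_eq_self_of_completelySemiprime_general N hcsp
end

section
/- Let φ : M → M' be an R-module epimorphism and N a submodule of M containing ker φ. If β(N) = ⟨E_M(N)⟩, then β(φ(N)) = ⟨E_{M'}(φ(N))⟩. -/
/-! A surjection `φ` with `ker φ ≤ N` identifies the submodules of `M` containing `N` with the
submodules of `M'` containing `φ(N)`, via `map φ` and `comap φ`. This correspondence preserves
primeness, so `β(φ(N)) = φ(β(N))`; and since `r ^ k • m ∈ N ↔ r ^ k • φ m ∈ φ(N)`, also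
`E_{M'}(φ(N)) = φ(E_M(N))`. As `map φ` commutes with taking spans, the radical formula for `N`
is carried over to `φ(N)`. -/

section Map

variable {R : Type*} [Ring R] {M M' : Type*} [AddCommGroup M] [Module R M]
  [AddCommGroup M'] [Module R M'] {φ : M →ₗ[R] M'}

theorem IsPrimeSubmodule.comap_of_surjective (hsurj : Function.Surjective φ)
    {P' : Submodule R M'} (hP' : IsPrimeSubmodule P') : IsPrimeSubmodule (P'.comap φ) := by
  obtain ⟨hne, hprime⟩ := hP'
  refine ⟨fun htop => hne ?_, fun A K hAK => ?_⟩
  · rw [← Submodule.map_comap_eq_of_surjective hsurj P', htop, Submodule.map_top,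
      LinearMap.range_eq_top.mpr hsurj]
  · have hAK' : ∀ a ∈ A, ∀ n ∈ K.map φ, a • n ∈ P' := by
      rintro a ha _ ⟨m, hm, rfl⟩
      simpa using hAK a ha m hm
    rcases hprime A (K.map φ) hAK' with hK | hA
    · exact Or.inl (Submodule.map_le_iff_le_comap.mp hK)
    · exact Or.inr fun a ha x => by simpa using hA a ha (φ x)

theorem IsPrimeSubmodule.map_of_surjective (hsurj : Function.Surjective φ)
    {P : Submodule R M} (hP : IsPrimeSubmodule P) (hker : LinearMap.ker φ ≤ P) :
    IsPrimeSubmodule (P.map φ) := by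
  obtain ⟨hne, hprime⟩ := hP
  have hcomap : (P.map φ).comap φ = P := Submodule.comap_map_eq_self hker
  refine ⟨fun htop => hne ?_, fun A K' hAK' => ?_⟩
  · rw [← hcomap, htop, Submodule.comap_top]
  · have hAK : ∀ a ∈ A, ∀ n ∈ K'.comap φ, a • n ∈ P := by
      intro a ha n hn
      rw [← hcomap, Submodule.mem_comap, map_smul]
      exact hAK' a ha (φ n) hn
    rcases hprime A (K'.comap φ) hAK with hK | hA
    · left
      rw [← Submodule.map_comap_eq_of_surjective hsurj K']
      exact Submodule.map_mono hK
    · right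
      intro a ha x
      obtain ⟨y, rfl⟩ := hsurj x
      rw [← map_smul]
      exact Submodule.mem_map_of_mem (hA a ha y)

theorem primeRadical_le {N P : Submodule R M} (hP : IsPrimeSubmodule P) (hNP : N ≤ P) :
    primeRadical N ≤ P :=
  sInf_le ⟨hP, hNP⟩

theorem primeRadical_map_of_surjective (hsurj : Function.Surjective φ) {N : Submodule R M}
    (hker : LinearMap.ker φ ≤ N) : primeRadical (N.map φ) = (primeRadical N).map φ := by
  apply le_antisymm
  · have hcomap : (primeRadical (N.map φ)).comap φ ≤ primeRadical N := by
      refine le_sInf fun P ⟨hP, hNP⟩ => ?_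
      have hkerP : LinearMap.ker φ ≤ P := hker.trans hNP
      rw [← Submodule.comap_map_eq_self hkerP]
      exact Submodule.comap_mono
        (primeRadical_le (hP.map_of_surjective hsurj hkerP) (Submodule.map_mono hNP))
    calc primeRadical (N.map φ)
        = ((primeRadical (N.map φ)).comap φ).map φ :=
          (Submodule.map_comap_eq_of_surjective hsurj _).symm
      _ ≤ (primeRadical N).map φ := Submodule.map_mono hcomap
  · refine le_sInf fun P' ⟨hP', hNP'⟩ => Submodule.map_le_iff_le_comap.mpr ?_
    exact primeRadical_le (hP'.comap_of_surjective hsurj) (Submodule.map_le_iff_le_comap.mp hNP')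

theorem envelope_map_of_surjective (hsurj : Function.Surjective φ) {N : Submodule R M}
    (hker : LinearMap.ker φ ≤ N) : envelope (N.map φ) = φ '' envelope N := by
  have hmem : ∀ m, φ m ∈ N.map φ ↔ m ∈ N := fun m => by
    rw [← Submodule.mem_comap, Submodule.comap_map_eq_self hker]
  ext x
  constructor
  · rintro ⟨r, m', k, hk, hm', rfl⟩
    obtain ⟨m, rfl⟩ := hsurj m'
    rw [← map_smul, hmem] at hm'
    exact ⟨r • m, ⟨r, m, k, hk, hm', rfl⟩, map_smul φ r m⟩
  · rintro ⟨_, ⟨r, m, k, hk, hm, rfl⟩, rfl⟩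
    exact ⟨r, φ m, k, hk, by rwa [← map_smul, hmem], map_smul φ r m⟩

end Map

/-- (McCasland–Moore) if `φ : M → M'` is an epimorphism, `ker φ ⊆ N` and
`β(N) = ⟨E_M(N)⟩`, then `β(φ(N)) = ⟨E_{M'}(φ(N))⟩`. -/
theorem radical_formula_map {R : Type*} [Ring R] {M M' : Type*} [AddCommGroup M]
    [Module R M] [AddCommGroup M'] [Module R M'] (φ : M →ₗ[R] M')
    (hsurj : Function.Surjective φ) (N : Submodule R M)
    (hker : LinearMap.ker φ ≤ N)
    (h : primeRadical N = Submodule.span R (envelope N)) :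
    primeRadical (N.map φ) = Submodule.span R (envelope (N.map φ)) := by
  rw [primeRadical_map_of_surjective hsurj hker, envelope_map_of_surjective hsurj hker,
    Submodule.span_image, h]
end

section
/- If P is a completely prime submodule of an R-module M, then for every m ∈ M \ P, the set (P : {m}) = {r ∈ R : rm ∈ P} is a completely prime ideal of R and equals (P : M). -/
/-- A two-sided ideal `I` of `R` is prime if it is proper and `A B ⊆ I` implies
`A ⊆ I` or `B ⊆ I` for all two-sided ideals `A`, `B`. -/
def IsPrimeTwoSidedIdeal {R : Type*} [Ring R] (I : TwoSidedIdeal R) : Prop :=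
  I ≠ ⊤ ∧ ∀ A B : TwoSidedIdeal R, (∀ a ∈ A, ∀ b ∈ B, a * b ∈ I) → A ≤ I ∨ B ≤ I

/-- A two-sided ideal `I` of `R` is completely prime if it is proper and
`a * b ∈ I` implies `a ∈ I` or `b ∈ I`. -/
def IsCompletelyPrimeTwoSidedIdeal {R : Type*} [Ring R] (I : TwoSidedIdeal R) : Prop :=
  I ≠ ⊤ ∧ ∀ a b : R, a * b ∈ I → a ∈ I ∨ b ∈ I

/-- The prime radical `β(R)` of the ring `R`: the intersection of all prime
two-sided ideals of `R`. -/
def ringPrimeRadical (R : Type*) [Ring R] : Set R :=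
  {a : R | ∀ I : TwoSidedIdeal R, IsPrimeTwoSidedIdeal I → a ∈ I}

/-- The completely prime radical `β_co(R)` of the ring `R`: the intersection of all
completely prime two-sided ideals of `R`. -/
def ringCpRadical (R : Type*) [Ring R] : Set R :=
  {a : R | ∀ I : TwoSidedIdeal R, IsCompletelyPrimeTwoSidedIdeal I → a ∈ I}

theorem Submodule.mem_colon_top {R : Type*} [Semiring R] {M : Type*} [AddCommMonoid M]
    [Module R M] {P : Submodule R M} {r : R} :
    r ∈ P.colon (⊤ : Submodule R M) ↔ ∀ x : M, r • x ∈ P := by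
  simp [mem_colon]

namespace IsCompletelyPrimeSubmodule

variable {R : Type*} [Ring R] {M : Type*} [AddCommGroup M] [Module R M] {P : Submodule R M}

open Submodule

theorem smul_mem_iff_forall_smul_mem (hP : IsCompletelyPrimeSubmodule P) {m : M} (hm : m ∉ P)
    {r : R} : r • m ∈ P ↔ ∀ x : M, r • x ∈ P :=
  ⟨fun h ↦ (hP.2 r m h).resolve_left hm, fun h ↦ h m⟩

theorem colon_singleton_eq_colon_top (hP : IsCompletelyPrimeSubmodule P) {m : M} (hm : m ∉ P) :
    P.colon {m} = P.colon (⊤ : Submodule R M) := by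
  ext r
  rw [mem_colon_singleton, mem_colon_top, hP.smul_mem_iff_forall_smul_mem hm]

theorem isCompletelyPrime_colon_top (hP : IsCompletelyPrimeSubmodule P) :
    IsCompletelyPrimeTwoSidedIdeal (P.colon (⊤ : Submodule R M)).toTwoSided := by
  simp only [IsCompletelyPrimeTwoSidedIdeal, Ideal.mem_toTwoSided, mem_colon_top]
  refine ⟨fun htop ↦ hP.1 ?_, fun a b hab ↦ or_iff_not_imp_right.2 fun hb ↦ ?_⟩
  · have hone : (1 : R) ∈ (P.colon (⊤ : Submodule R M)).toTwoSided := htop ▸ trivial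
    exact eq_top_iff'.2 fun x ↦ by simpa using mem_colon_top.1 (Ideal.mem_toTwoSided.1 hone) x
  · -- a witness `b • x ∉ P` lets complete primality turn `a • (b • x) ∈ P` into `a • M ⊆ P`
    obtain ⟨x, hbx⟩ := not_forall.1 hb
    exact (hP.2 a (b • x) (mul_smul a b x ▸ hab x)).resolve_left hbx

end IsCompletelyPrimeSubmodule

open Submodule in
/-- if `P` is a completely prime submodule and `m ∉ P`, then
`(P : {m}) = {r : R | r • m ∈ P}` is a completely prime (two-sided) ideal of `R` and
equals `(P : M)`. -/
theorem colon_completelyPrime {R : Type*} [Ring R] {M : Type*} [AddCommGroup M]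
    [Module R M] (P : Submodule R M) (hcp : IsCompletelyPrimeSubmodule P)
    (m : M) (hm : m ∉ P) :
    ∃ I : TwoSidedIdeal R, (I : Set R) = {r : R | r • m ∈ P} ∧
      IsCompletelyPrimeTwoSidedIdeal I ∧
      (I : Set R) = {r : R | ∀ x : M, r • x ∈ P} := by
  refine ⟨(P.colon (⊤ : Submodule R M)).toTwoSided, ?_, hcp.isCompletelyPrime_colon_top, ?_⟩
  · rw [Ideal.coe_toTwoSided, ← hcp.colon_singleton_eq_colon_top hm]
    exact Set.ext fun r ↦ mem_colon_singleton
  · exact Set.ext fun r ↦ Ideal.mem_toTwoSided.trans mem_colon_top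
end
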